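/- arXiv:2310.14428 — 4 statements merged into one kernel-verified Lean document; each statement's English description precedes it below -/
import Mathlib

section
/- For every integer N ≥ 1, the cardinality of C_N equals ψ(N); more precisely, ∑_{d | N} d·φ(gcd(d, N/d))/gcd(d, N/d) = ψ(N), where φ is Euler's totient function. -/
open Complex

noncomputable section

/-- `q = e^{2πiz}`. -/
def qexp (z : ℂ) : ℂ := Complex.exp (2 * Real.pi * Complex.I * z)

/-- The modular discriminant `Δ`, normalized by `Δ(τ) = q ∏_{n≥1} (1-qⁿ)²⁴`, `q = e^{2πiτ}`. -/
def Delta (z : ℂ) : ℂ := qexp z * ∏' n : ℕ, (1 - qexp z ^ (n + 1)) ^ 24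

/-- The normalized Eisenstein series `E₄(τ) = 1 + 240 ∑_{n≥1} σ₃(n) qⁿ`. -/
def E4 (z : ℂ) : ℂ :=
  1 + 240 * ∑' n : ℕ, (∑ d ∈ (n + 1).divisors, (d : ℂ) ^ 3) * qexp z ^ (n + 1)

/-- The modular `j`-function, `j = E₄³ / Δ`. -/
def jfun (z : ℂ) : ℂ := E4 z ^ 3 / Delta z

/-- `ψ(N) = N ∏_{p ∣ N} (1 + 1/p)`. -/
def psi (N : ℕ) : ℝ := N * ∏ p ∈ N.primeFactors, (1 + (p : ℝ)⁻¹)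

/-- `λ_N = ∑_{pⁿ ‖ N} (pⁿ-1)/(p^{n-1}(p²-1)) log p`. -/
def lam (N : ℕ) : ℝ :=
  ∑ p ∈ N.primeFactors,
    (((p : ℝ) ^ (N.factorization p) - 1) /
        ((p : ℝ) ^ (N.factorization p - 1) * ((p : ℝ) ^ 2 - 1))) * Real.log p

/-- The set `C_N` of matrices `[[a,b],[0,d]]` with `ad = N`, `a ≥ 1`, `0 ≤ b ≤ d-1`,
`gcd(a,b,d) = 1`, encoded as triples `(a, b, d)`. -/
def CN (N : ℕ) : Finset (ℕ × ℕ × ℕ) :=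
  (Finset.range (N + 1) ×ˢ Finset.range (N + 1) ×ˢ Finset.range (N + 1)).filter
    fun x => x.1 * x.2.2 = N ∧ 1 ≤ x.1 ∧ x.2.1 < x.2.2 ∧
      Nat.gcd x.1 (Nat.gcd x.2.1 x.2.2) = 1

/-- `τ_γ = (aτ+b)/d` for `γ = (a,b,d)`. -/
def act (γ : ℕ × ℕ × ℕ) (z : ℂ) : ℂ := ((γ.1 : ℂ) * z + (γ.2.1 : ℂ)) / (γ.2.2 : ℂ)

/-- `S_N(τ) = ∑_{γ ∈ C_N} log max {1, |j(τ_γ)|}`. -/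
def SN (N : ℕ) (z : ℂ) : ℝ :=
  ∑ γ ∈ CN N, Real.log (max 1 ‖jfun (act γ z)‖)

/-- Height of an integer polynomial in two variables: `log` of the maximum absolute value
of its coefficients. -/
def heightZ (Φ : MvPolynomial (Fin 2) ℤ) : ℝ :=
  Real.log ((Φ.support.sup fun m => (Φ.coeff m).natAbs : ℕ) : ℝ)

/-- Height of a complex polynomial in one variable: `log` of the maximum absolute value
of its coefficients. -/
def heightC (P : Polynomial ℂ) : ℝ :=
  Real.log ((P.support.sup fun n => ‖P.coeff n‖₊ : NNReal) : ℝ)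

/-- `Φ` is the modular polynomial of level `N`: for all `τ ∈ ℍ`,
`Φ(X, j(τ)) = ∏_{γ ∈ C_N} (X - j(τ_γ))`. -/
def IsModularPoly (N : ℕ) (Φ : MvPolynomial (Fin 2) ℤ) : Prop :=
  ∀ z : ℂ, 0 < z.im →
    MvPolynomial.aeval ![Polynomial.X, Polynomial.C (jfun z)] Φ =
      ∏ γ ∈ CN N, (Polynomial.X - Polynomial.C (jfun (act γ z)))

/-- Möbius action of `SL₂(ℤ)` on the upper half-plane. -/
def moebius (g : Matrix.SpecialLinearGroup (Fin 2) ℤ) (z : ℂ) : ℂ :=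
  (((g : Matrix (Fin 2) (Fin 2) ℤ) 0 0 : ℂ) * z + ((g : Matrix (Fin 2) (Fin 2) ℤ) 0 1 : ℂ)) /
    (((g : Matrix (Fin 2) (Fin 2) ℤ) 1 0 : ℂ) * z + ((g : Matrix (Fin 2) (Fin 2) ℤ) 1 1 : ℂ))

/-- The standard fundamental domain `𝓕` for `SL₂(ℤ)` acting on `ℍ`. -/
def FD : Set ℂ :=
  {z | 0 < z.im ∧ 1 ≤ ‖z‖ ∧ -(1/2 : ℝ) < z.re ∧ z.re ≤ 1/2 ∧
    (‖z‖ = 1 → 0 ≤ z.re)}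

/-- `w` is the representative in `𝓕` of the `SL₂(ℤ)`-orbit of `z`. -/
def IsRep (z w : ℂ) : Prop :=
  w ∈ FD ∧ ∃ g : Matrix.SpecialLinearGroup (Fin 2) ℤ, moebius g z = w
namespace CardCNAux

/-- The summand `d ↦ d φ(gcd(d,e))/gcd(d,e)`. -/
noncomputable def hfun (x y : ℕ) : ℝ :=
  (x : ℝ) * (Nat.totient (Nat.gcd x y) : ℝ) / (Nat.gcd x y : ℝ)

/-- `G(N) = ∑_{de = N} hfun d e`. -/
noncomputable def Gfun (N : ℕ) : ℝ := ∑ x ∈ N.divisorsAntidiagonal, hfun x.1 x.2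

lemma Gfun_one : Gfun 1 = 1 := by
  simp [Gfun, Nat.divisorsAntidiagonal_one, hfun]

lemma hfun_mul {a b c d : ℕ} (ha : a ≠ 0) (hc : c ≠ 0)
    (h1 : Nat.Coprime a c) (h2 : Nat.Coprime a d) (h3 : Nat.Coprime b c)
    (h4 : Nat.Coprime b d) :
    hfun (a * c) (b * d) = hfun a b * hfun c d := by
  have e1 : Nat.gcd (a * c) b = Nat.gcd a b := by
    rw [Nat.gcd_comm, Nat.Coprime.gcd_mul _ h1, h3.gcd_eq_one, mul_one, Nat.gcd_comm]
  have e2 : Nat.gcd (a * c) d = Nat.gcd c d := by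
    rw [Nat.gcd_comm, Nat.Coprime.gcd_mul _ h1, h2.symm.gcd_eq_one, one_mul, Nat.gcd_comm]
  have hg : Nat.gcd (a * c) (b * d) = Nat.gcd a b * Nat.gcd c d := by
    rw [Nat.Coprime.gcd_mul _ h4, e1, e2]
  have hcop : (Nat.gcd a b).Coprime (Nat.gcd c d) :=
    Nat.Coprime.coprime_dvd_left (Nat.gcd_dvd_left a b)
      (Nat.Coprime.coprime_dvd_right (Nat.gcd_dvd_left c d) h1)
  have htot : Nat.totient (Nat.gcd a b * Nat.gcd c d)
      = Nat.totient (Nat.gcd a b) * Nat.totient (Nat.gcd c d) := Nat.totient_mul hcop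
  have hg1 : (Nat.gcd a b : ℝ) ≠ 0 := by
    simp [Nat.gcd_eq_zero_iff, ha]
  have hg2 : (Nat.gcd c d : ℝ) ≠ 0 := by
    simp [Nat.gcd_eq_zero_iff, hc]
  rw [hfun, hfun, hfun, hg, htot]
  push_cast
  field_simp

lemma Gfun_mult : ∀ m n : ℕ, Nat.Coprime m n → Gfun (m * n) = Gfun m * Gfun n := by
  intro m n hmn
  rcases eq_or_ne m 0 with rfl | hm
  · have hn1 : n = 1 := by simpa using hmn
    subst hn1
    rw [zero_mul, Gfun_one, mul_one]
  rcases eq_or_ne n 0 with rfl | hn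
  · have hm1 : m = 1 := by simpa using hmn
    subst hm1
    rw [one_mul, Gfun_one, one_mul]
  rw [Gfun, Gfun, Gfun, Finset.sum_mul_sum, ← Finset.sum_product']
  refine Finset.sum_nbij'
    (i := fun x : ℕ × ℕ => ((x.1.gcd m, x.2.gcd m), (x.1.gcd n, x.2.gcd n)))
    (j := fun p : (ℕ × ℕ) × ℕ × ℕ => (p.1.1 * p.2.1, p.1.2 * p.2.2)) ?_ ?_ ?_ ?_ ?_
  · rintro ⟨u, v⟩ hx
    obtain ⟨huv, -⟩ := Nat.mem_divisorsAntidiagonal.mp hx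
    simp only [Finset.mem_product, Nat.mem_divisorsAntidiagonal]
    exact ⟨⟨Nat.gcd_mul_gcd_of_coprime_of_mul_eq_mul hmn huv, hm⟩,
      Nat.gcd_mul_gcd_of_coprime_of_mul_eq_mul hmn.symm (by rw [huv, mul_comm]), hn⟩
  · rintro ⟨⟨a, b⟩, c, d⟩ hp
    simp only [Finset.mem_product, Nat.mem_divisorsAntidiagonal] at hp
    obtain ⟨⟨hab, -⟩, hcd, -⟩ := hp
    refine Nat.mem_divisorsAntidiagonal.mpr ⟨?_, by simp [hm, hn]⟩
    rw [← hab, ← hcd]; ring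
  · rintro ⟨u, v⟩ hx
    obtain ⟨huv, -⟩ := Nat.mem_divisorsAntidiagonal.mp hx
    have hu : u ∣ m * n := Dvd.intro v huv
    have hv : v ∣ m * n := Dvd.intro_left u huv
    simp only [Prod.mk.injEq]
    constructor
    · rw [← Nat.Coprime.gcd_mul _ hmn, Nat.gcd_eq_left hu]
    · rw [← Nat.Coprime.gcd_mul _ hmn, Nat.gcd_eq_left hv]
  · rintro ⟨⟨a, b⟩, c, d⟩ hp
    simp only [Finset.mem_product, Nat.mem_divisorsAntidiagonal] at hp
    obtain ⟨⟨hab, -⟩, hcd, -⟩ := hp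
    have hda : a ∣ m := Dvd.intro b hab
    have hdb : b ∣ m := Dvd.intro_left a hab
    have hdc : c ∣ n := Dvd.intro d hcd
    have hdd : d ∣ n := Dvd.intro_left c hcd
    have hcm : Nat.Coprime c m := Nat.Coprime.coprime_dvd_left hdc hmn.symm
    have hdm : Nat.Coprime d m := Nat.Coprime.coprime_dvd_left hdd hmn.symm
    have han : Nat.Coprime a n := Nat.Coprime.coprime_dvd_left hda hmn
    have hbn : Nat.Coprime b n := Nat.Coprime.coprime_dvd_left hdb hmn
    simp only [Prod.mk.injEq]
    refine ⟨⟨?_, ?_⟩, ?_, ?_⟩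
    · rw [mul_comm, Nat.Coprime.gcd_mul_left_cancel a hcm, Nat.gcd_eq_left hda]
    · rw [mul_comm, Nat.Coprime.gcd_mul_left_cancel b hdm, Nat.gcd_eq_left hdb]
    · rw [Nat.Coprime.gcd_mul_left_cancel c han, Nat.gcd_eq_left hdc]
    · rw [Nat.Coprime.gcd_mul_left_cancel d hbn, Nat.gcd_eq_left hdd]
  · rintro ⟨u, v⟩ hx
    obtain ⟨huv, hmn0⟩ := Nat.mem_divisorsAntidiagonal.mp hx
    have hu0 : u ≠ 0 := by rintro rfl; exact hmn0 (by rw [← huv, zero_mul])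
    have hv0 : v ≠ 0 := by rintro rfl; exact hmn0 (by rw [← huv, mul_zero])
    have ha0 : u.gcd m ≠ 0 := by simp [Nat.gcd_eq_zero_iff, hu0]
    have hc0 : u.gcd n ≠ 0 := by simp [Nat.gcd_eq_zero_iff, hu0]
    have hdam : u.gcd m ∣ m := Nat.gcd_dvd_right u m
    have hdbm : v.gcd m ∣ m := Nat.gcd_dvd_right v m
    have hdcn : u.gcd n ∣ n := Nat.gcd_dvd_right u n
    have hddn : v.gcd n ∣ n := Nat.gcd_dvd_right v n
    have h1 : Nat.Coprime (u.gcd m) (u.gcd n) :=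
      Nat.Coprime.coprime_dvd_left hdam (Nat.Coprime.coprime_dvd_right hdcn hmn)
    have h2 : Nat.Coprime (u.gcd m) (v.gcd n) :=
      Nat.Coprime.coprime_dvd_left hdam (Nat.Coprime.coprime_dvd_right hddn hmn)
    have h3 : Nat.Coprime (v.gcd m) (u.gcd n) :=
      Nat.Coprime.coprime_dvd_left hdbm (Nat.Coprime.coprime_dvd_right hdcn hmn)
    have h4 : Nat.Coprime (v.gcd m) (v.gcd n) :=
      Nat.Coprime.coprime_dvd_left hdbm (Nat.Coprime.coprime_dvd_right hddn hmn)
    have hu : u ∣ m * n := Dvd.intro v huv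
    have hv : v ∣ m * n := Dvd.intro_left u huv
    have eu : u.gcd m * u.gcd n = u := by
      rw [← Nat.Coprime.gcd_mul _ hmn, Nat.gcd_eq_left hu]
    have ev : v.gcd m * v.gcd n = v := by
      rw [← Nat.Coprime.gcd_mul _ hmn, Nat.gcd_eq_left hv]
    calc hfun u v = hfun (u.gcd m * u.gcd n) (v.gcd m * v.gcd n) := by rw [eu, ev]
      _ = hfun (u.gcd m) (v.gcd m) * hfun (u.gcd n) (v.gcd n) :=
        hfun_mul ha0 hc0 h1 h2 h3 h4

lemma hfun_prime_pow {p : ℕ} (hp : p.Prime) {u v : ℕ} (hu : 1 ≤ u) (hv : 1 ≤ v) :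
    hfun (p ^ u) (p ^ v) = (p : ℝ) ^ u - (p : ℝ) ^ (u - 1) := by
  have hg : Nat.gcd (p ^ u) (p ^ v) = p ^ min u v := by
    rcases le_total u v with h | h
    · rw [Nat.gcd_eq_left (pow_dvd_pow p h), min_eq_left h]
    · rw [Nat.gcd_eq_right (pow_dvd_pow p h), min_eq_right h]
  obtain ⟨m, hm⟩ : ∃ m, min u v = m + 1 :=
    ⟨min u v - 1, (Nat.succ_pred_eq_of_pos (lt_min hu hv)).symm⟩
  obtain ⟨w, rfl⟩ : ∃ w, u = w + 1 := ⟨u - 1, (Nat.succ_pred_eq_of_pos hu).symm⟩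
  have htot : Nat.totient (p ^ (m + 1)) = p ^ m * (p - 1) :=
    Nat.totient_prime_pow_succ hp m
  have hp0 : (p : ℝ) ≠ 0 := Nat.cast_ne_zero.mpr hp.pos.ne'
  rw [hfun, hg, hm, htot]
  push_cast [Nat.cast_sub hp.one_le]
  rw [pow_succ, pow_succ]
  field_simp

lemma Gfun_prime_pow {p k : ℕ} (hp : p.Prime) (hk : 1 ≤ k) :
    Gfun (p ^ k) = (p : ℝ) ^ k + (p : ℝ) ^ (k - 1) := by
  obtain ⟨k', rfl⟩ : ∃ k', k = k' + 1 := ⟨k - 1, (Nat.succ_pred_eq_of_pos hk).symm⟩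
  have key : Gfun (p ^ (k' + 1))
      = ∑ i ∈ Finset.range (k' + 2), hfun (p ^ i) (p ^ (k' + 1 - i)) := by
    rw [Gfun, Nat.sum_divisorsAntidiagonal hfun, Nat.sum_divisors_prime_pow hp]
    refine Finset.sum_congr rfl fun i hi => ?_
    rw [Nat.pow_div (by have := Finset.mem_range.mp hi; omega) hp.pos]
  rw [key, Finset.sum_range_succ, Finset.sum_range_succ']
  have h0 : hfun (p ^ 0) (p ^ (k' + 1 - 0)) = 1 := by
    simp [hfun]
  have hlast : hfun (p ^ (k' + 1)) (p ^ (k' + 1 - (k' + 1))) = (p : ℝ) ^ (k' + 1) := by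
    simp [hfun]
  have hmid : ∀ i ∈ Finset.range k', hfun (p ^ (i + 1)) (p ^ (k' + 1 - (i + 1)))
      = (p : ℝ) ^ (i + 1) - (p : ℝ) ^ i := by
    intro i hi
    have hik := Finset.mem_range.mp hi
    rw [hfun_prime_pow hp (Nat.le_add_left 1 i) (by omega)]
    simp
  rw [Finset.sum_congr rfl hmid, Finset.sum_range_sub (fun i => (p : ℝ) ^ i), h0, hlast]
  simp only [Nat.add_sub_cancel, pow_zero]
  ring

lemma psi_eq_prod {N : ℕ} (hN : N ≠ 0) :
    psi N = ∏ p ∈ N.primeFactors,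
      ((p : ℝ) ^ (N.factorization p) + (p : ℝ) ^ (N.factorization p - 1)) := by
  have hNfac : (N : ℝ) = ∏ p ∈ N.primeFactors, (p : ℝ) ^ (N.factorization p) := by
    conv_lhs => rw [← Nat.factorization_prod_pow_eq_self hN]
    rw [Nat.prod_factorization_eq_prod_primeFactors]
    push_cast
    rfl
  rw [psi, hNfac, ← Finset.prod_mul_distrib]
  refine Finset.prod_congr rfl fun p hp => ?_
  have hp' := Nat.prime_of_mem_primeFactors hp
  have hk : 1 ≤ N.factorization p :=
    (Nat.Prime.factorization_pos_of_dvd hp' hN (Nat.dvd_of_mem_primeFactors hp))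
  obtain ⟨m, hm⟩ : ∃ m, N.factorization p = m + 1 := ⟨_, (Nat.succ_pred_eq_of_pos hk).symm⟩
  rw [hm]
  have hp0 : (p : ℝ) ≠ 0 := Nat.cast_ne_zero.mpr hp'.pos.ne'
  simp only [Nat.add_sub_cancel]
  field_simp
  ring

lemma Gfun_eq_psi {N : ℕ} (hN : N ≠ 0) : Gfun N = psi N := by
  rw [Nat.multiplicative_factorization Gfun Gfun_mult Gfun_one hN, psi_eq_prod hN,
    Finsupp.prod, Nat.support_factorization]
  refine Finset.prod_congr rfl fun p hp => ?_
  have hp' := Nat.prime_of_mem_primeFactors hp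
  have hk : 1 ≤ N.factorization p :=
    (Nat.Prime.factorization_pos_of_dvd hp' hN (Nat.dvd_of_mem_primeFactors hp))
  exact Gfun_prime_pow hp' hk

lemma count_b (g m : ℕ) (hg : 0 < g) :
    ((Finset.range (g * m)).filter fun b => Nat.gcd b g = 1).card = m * g.totient := by
  induction m with
  | zero => simp
  | succ m ih =>
    have hsplit : Finset.range (g * (m + 1))
        = Finset.range (g * m) ∪ Finset.Ico (g * m) (g * m + g) := by
      rw [Finset.range_eq_Ico, Finset.range_eq_Ico,
        Finset.Ico_union_Ico_eq_Ico (Nat.zero_le _) (Nat.le_add_right _ _), Nat.mul_succ]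
    rw [hsplit, Finset.filter_union, Finset.card_union_of_disjoint, ih]
    · have heq : ((Finset.Ico (g * m) (g * m + g)).filter fun b => Nat.gcd b g = 1)
          = ((Finset.Ico (g * m) (g * m + g)).filter fun b => g.Coprime b) := by
        apply Finset.filter_congr
        intro x _
        rw [Nat.Coprime, Nat.gcd_comm]
      rw [heq, Nat.filter_coprime_Ico_eq_totient]
      ring
    · exact Finset.disjoint_filter_filter
        (by rw [Finset.range_eq_Ico]
            exact Finset.Ico_disjoint_Ico_consecutive 0 (g * m) (g * m + g))

lemma count_b' (g d : ℕ) (hg : 0 < g) (hgd : g ∣ d) :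
    ((Finset.range d).filter fun b => Nat.gcd b g = 1).card = (d / g) * g.totient := by
  obtain ⟨m, rfl⟩ := hgd
  rw [Nat.mul_div_cancel_left _ hg]
  exact count_b g m hg

end CardCNAux

/-- `#C_N = ψ(N)`; more precisely `∑_{d ∣ N} d·φ(gcd(d, N/d))/gcd(d, N/d) = ψ(N)`. -/
theorem card_CN (N : ℕ) (hN : 1 ≤ N) :
    ((CN N).card : ℝ) = psi N ∧
    ∑ d ∈ N.divisors,
      (d : ℝ) * (Nat.totient (Nat.gcd d (N / d)) : ℝ) / (Nat.gcd d (N / d) : ℝ) = psi N := by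
  classical
  have hN0 : N ≠ 0 := by omega
  have hsum2 : ∑ d ∈ N.divisors,
      (d : ℝ) * (Nat.totient (Nat.gcd d (N / d)) : ℝ) / (Nat.gcd d (N / d) : ℝ)
      = CardCNAux.Gfun N := (Nat.sum_divisorsAntidiagonal CardCNAux.hfun (n := N)).symm
  have hG : CardCNAux.Gfun N = psi N := CardCNAux.Gfun_eq_psi hN0
  have hcard1 : (CN N).card = ∑ x ∈ N.divisorsAntidiagonal,
      ((Finset.range x.2).filter fun b => Nat.gcd b (Nat.gcd x.1 x.2) = 1).card := by
    rw [Finset.card_eq_sum_card_fiberwise (f := fun x : ℕ × ℕ × ℕ => (x.1, x.2.2))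
      (t := N.divisorsAntidiagonal) (fun x hx => by
        simp only [Finset.mem_coe, CN, Finset.mem_filter, Finset.mem_product, Finset.mem_range] at hx
        exact Nat.mem_divisorsAntidiagonal.mpr ⟨hx.2.1, hN0⟩)]
    refine Finset.sum_congr rfl ?_
    rintro ⟨a, d⟩ hx
    obtain ⟨had, -⟩ := Nat.mem_divisorsAntidiagonal.mp hx
    have ha0 : a ≠ 0 := by rintro rfl; exact hN0 (by rw [← had, zero_mul])
    have hd0 : d ≠ 0 := by rintro rfl; exact hN0 (by rw [← had, mul_zero])
    have haN : a ≤ N := Nat.le_of_dvd (Nat.pos_of_ne_zero hN0) (Dvd.intro d had)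
    have hdN : d ≤ N := Nat.le_of_dvd (Nat.pos_of_ne_zero hN0) (Dvd.intro_left a had)
    apply Finset.card_nbij' (i := fun t : ℕ × ℕ × ℕ => t.2.1)
      (j := fun b : ℕ => (a, b, d))
    · rintro ⟨a', b, d'⟩ ht
      rw [Finset.mem_coe, Finset.mem_filter] at ht
      obtain ⟨htCN, hfib⟩ := ht
      simp only [Prod.mk.injEq] at hfib
      obtain ⟨ha', hd'⟩ := hfib
      subst ha'; subst hd'
      simp only [CN, Finset.mem_filter] at htCN
      obtain ⟨-, had', ha1, hbd, hgcd⟩ := htCN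
      simp only [Finset.mem_coe, Finset.mem_filter, Finset.mem_range]
      exact ⟨hbd, by rw [← Nat.gcd_assoc, Nat.gcd_comm b a', Nat.gcd_assoc]; exact hgcd⟩
    · intro b hb
      simp only [Finset.mem_coe, Finset.mem_filter, Finset.mem_range] at hb
      obtain ⟨hbd, hgcd⟩ := hb
      rw [Finset.mem_coe, Finset.mem_filter]
      constructor
      · simp only [CN, Finset.mem_filter, Finset.mem_product, Finset.mem_range]
        exact ⟨⟨by omega, by omega, by omega⟩, had, Nat.one_le_iff_ne_zero.mpr ha0, hbd,
          by rw [← Nat.gcd_assoc, Nat.gcd_comm a b, Nat.gcd_assoc]; exact hgcd⟩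
      · rfl
    · rintro ⟨a', b, d'⟩ ht
      rw [Finset.mem_coe, Finset.mem_filter] at ht
      have hfib := ht.2
      simp only [Prod.mk.injEq] at hfib
      obtain ⟨ha', hd'⟩ := hfib
      subst ha'; subst hd'
      rfl
    · intro b _
      rfl
  have hcount : ∀ x ∈ N.divisorsAntidiagonal,
      ((((Finset.range x.2).filter fun b => Nat.gcd b (Nat.gcd x.1 x.2) = 1).card : ℕ) : ℝ)
        = CardCNAux.hfun x.2 x.1 := by
    rintro ⟨a, d⟩ hx
    obtain ⟨had, -⟩ := Nat.mem_divisorsAntidiagonal.mp hx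
    have hd0 : d ≠ 0 := by rintro rfl; exact hN0 (by rw [← had, mul_zero])
    have hg0 : Nat.gcd a d ≠ 0 := by simp [Nat.gcd_eq_zero_iff, hd0]
    have hgd : Nat.gcd a d ∣ d := Nat.gcd_dvd_right a d
    have hcnt : ((Finset.range d).filter fun b => Nat.gcd b (Nat.gcd a d) = 1).card
        = (d / Nat.gcd a d) * (Nat.gcd a d).totient :=
      CardCNAux.count_b' (Nat.gcd a d) d (Nat.pos_of_ne_zero hg0) hgd
    rw [hcnt, CardCNAux.hfun, Nat.gcd_comm d a]
    rw [Nat.cast_mul, Nat.cast_div hgd (Nat.cast_ne_zero.mpr hg0)]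
    ring
  have hcard2 : ((CN N).card : ℝ) = CardCNAux.Gfun N := by
    rw [hcard1]
    push_cast
    rw [Finset.sum_congr rfl hcount, Nat.sum_divisorsAntidiagonal' (fun x y => CardCNAux.hfun y x),
      CardCNAux.Gfun, Nat.sum_divisorsAntidiagonal CardCNAux.hfun]
  exact ⟨hcard2.trans hG, hsum2.trans hG⟩
end
end

section
/- Let M ≥ 1 be an integer. Then the interval [1/(M+1), (M+2)/(M+1)) can be written as a disjoint union, over pairs (h, k) with 1 ≤ k ≤ M, 1 ≤ h ≤ k and gcd(h, k) = 1, of half-open intervals I_M(h/k) = [ρ₁, ρ₂) containing h/k and satisfying 1/(2Mk) ≤ h/k − ρ₁ ≤ 1/((M+1)k) and 1/(2Mk) ≤ ρ₂ − h/k ≤ 1/((M+1)k). -/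
open Complex

noncomputable section

namespace FareyAux

def Fset (M : ℕ) : Finset (ℕ × ℕ) :=
  (Finset.Icc 1 M ×ˢ Finset.Icc 1 M).filter
    (fun p : ℕ × ℕ => p.1 ≤ p.2 ∧ Nat.gcd p.1 p.2 = 1)

noncomputable def v (p : ℕ × ℕ) : ℝ := (p.1 : ℝ) / (p.2 : ℝ)

lemma mem_Fset {M : ℕ} {p : ℕ × ℕ} :
    p ∈ Fset M ↔ 1 ≤ p.1 ∧ p.1 ≤ p.2 ∧ p.2 ≤ M ∧ Nat.gcd p.1 p.2 = 1 := by
  simp only [Fset, Finset.mem_filter, Finset.mem_product, Finset.mem_Icc]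
  constructor
  · rintro ⟨⟨⟨a1, a2⟩, a3, a4⟩, a5, a6⟩; exact ⟨a1, a5, a4, a6⟩
  · rintro ⟨a1, a5, a4, a6⟩; exact ⟨⟨⟨a1, le_trans a5 a4⟩, le_trans a1 a5, a4⟩, a5, a6⟩

lemma den_pos {M : ℕ} {p : ℕ × ℕ} (hp : p ∈ Fset M) : 0 < p.2 := by
  obtain ⟨a, b, _, _⟩ := mem_Fset.mp hp; omega

lemma den_posR {M : ℕ} {p : ℕ × ℕ} (hp : p ∈ Fset M) : (0 : ℝ) < (p.2 : ℝ) := by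
  exact_mod_cast den_pos hp

lemma v_lt_iff {p q : ℕ × ℕ} (hp : (0:ℝ) < p.2) (hq : (0:ℝ) < q.2) :
    v p < v q ↔ p.1 * q.2 < q.1 * p.2 := by
  rw [v, v, div_lt_div_iff₀ hp hq]
  exact_mod_cast Iff.rfl

lemma v_le_one {M : ℕ} {p : ℕ × ℕ} (hp : p ∈ Fset M) : v p ≤ 1 := by
  obtain ⟨a, b, _, _⟩ := mem_Fset.mp hp
  rw [v, div_le_one (den_posR hp)]
  exact_mod_cast b

lemma one_div_M_le_v {M : ℕ} {p : ℕ × ℕ} (hp : p ∈ Fset M) : 1 / (M : ℝ) ≤ v p := by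
  obtain ⟨a, b, c, _⟩ := mem_Fset.mp hp
  have hM : (0:ℝ) < M := by
    have : 0 < M := by omega
    exact_mod_cast this
  rw [v, div_le_div_iff₀ hM (den_posR hp)]
  have : p.2 ≤ M * p.1 := le_trans c (Nat.le_mul_of_pos_right M a)
  exact_mod_cast by linarith [(by exact_mod_cast this : (p.2:ℝ) ≤ (M:ℝ) * p.1)]

lemma v_inj {M : ℕ} {p q : ℕ × ℕ} (hp : p ∈ Fset M) (hq : q ∈ Fset M)
    (h : v p = v q) : p = q := by
  obtain ⟨a1, _, _, g1⟩ := mem_Fset.mp hp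
  obtain ⟨b1, _, _, g2⟩ := mem_Fset.mp hq
  have hcross : p.1 * q.2 = q.1 * p.2 := by
    have := (div_eq_div_iff (den_posR hp).ne' (den_posR hq).ne').mp h
    exact_mod_cast this
  have h1 : p.2 ∣ q.2 := by
    have : p.2 ∣ p.1 * q.2 := hcross ▸ ⟨q.1, mul_comm q.1 p.2⟩
    exact (Nat.Coprime.dvd_of_dvd_mul_left (Nat.coprime_comm.mp g1) this)
  have h2 : q.2 ∣ p.2 := by
    have : q.2 ∣ q.1 * p.2 := hcross.symm ▸ ⟨p.1, mul_comm p.1 q.2⟩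
    exact (Nat.Coprime.dvd_of_dvd_mul_left (Nat.coprime_comm.mp g2) this)
  have hd : p.2 = q.2 := Nat.dvd_antisymm h1 h2
  have hn : p.1 = q.1 := by
    rw [hd] at hcross
    exact Nat.eq_of_mul_eq_mul_right (den_pos hq) hcross
  exact Prod.ext hn hd


def adj (M : ℕ) (p q : ℕ × ℕ) : Prop :=
  p ∈ Fset M ∧ q ∈ Fset M ∧ v p < v q ∧ ∀ r ∈ Fset M, v p < v r → v q ≤ v r

set_option maxHeartbeats 1000000 in
lemma exists_succ {M : ℕ} (hM : 1 ≤ M) {p : ℕ × ℕ} (hp : p ∈ Fset M)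
    (hlt : p.1 < p.2) :
    ∃ q, adj M p q ∧ q.1 * p.2 = p.1 * q.2 + 1 ∧ M < p.2 + q.2 := by
  obtain ⟨h1, hle, h2M, hg⟩ := mem_Fset.mp hp
  set h : ℕ := p.1 with hh
  set k : ℕ := p.2 with hk
  have hk0 : 0 < k := by omega
  have hkZ : (0:ℤ) < (k:ℤ) := by exact_mod_cast hk0
  -- Bezout
  have hbez : (1 : ℤ) = h * Nat.gcdA h k + k * Nat.gcdB h k := by
    have := Nat.gcd_eq_gcd_ab h k
    rw [hg] at this
    exact_mod_cast this
  set y₀ : ℤ := -(Nat.gcdA h k) with hy₀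
  set x₀ : ℤ := Nat.gcdB h k with hx₀
  have hbez' : (k:ℤ) * x₀ - h * y₀ = 1 := by rw [hy₀, hx₀]; linarith [hbez]
  set Y : ℤ := (M:ℤ) - ((M:ℤ) - y₀) % k with hYdef
  have hmod1 : 0 ≤ ((M:ℤ) - y₀) % k := Int.emod_nonneg _ (by exact_mod_cast hk0.ne')
  have hmod2 : ((M:ℤ) - y₀) % k < k := Int.emod_lt_of_pos _ hkZ
  have hYeq : Y = y₀ + k * (((M:ℤ) - y₀) / k) := by
    rw [hYdef, Int.emod_def]; ring
  set X : ℤ := x₀ + h * (((M:ℤ) - y₀) / k) with hXdef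
  have hkey : (k:ℤ) * X = 1 + h * Y := by
    rw [hXdef, hYeq]; linear_combination hbez'
  have hYub : Y ≤ (M:ℤ) := by omega
  have hYlb : (M:ℤ) - k < Y := by omega
  have hY1 : 1 ≤ Y := by
    have : (k:ℤ) ≤ M := by exact_mod_cast h2M
    omega
  have hX1 : 1 ≤ X := by
    have h2 : (2:ℤ) ≤ k * X := by
      have : (1:ℤ) ≤ (h:ℤ) := by exact_mod_cast h1
      nlinarith
    by_contra hc
    push_neg at hc
    nlinarith
  have hXY : X ≤ Y := by
    have hhk : (h:ℤ) ≤ (k:ℤ) - 1 := by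
      have : h + 1 ≤ k := hlt
      have := (by exact_mod_cast this : (h:ℤ) + 1 ≤ (k:ℤ))
      omega
    have : (k:ℤ) * X ≤ k * Y := by nlinarith
    exact le_of_mul_le_mul_left this hkZ
  set q : ℕ × ℕ := (X.toNat, Y.toNat) with hq
  have hq1 : (q.1 : ℤ) = X := Int.toNat_of_nonneg (by omega)
  have hq2 : (q.2 : ℤ) = Y := Int.toNat_of_nonneg (by omega)
  have hdet : q.1 * k = h * q.2 + 1 := by
    have : (q.1 * k : ℤ) = (h * q.2 + 1 : ℤ) := by
      push_cast [hq1, hq2]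
      linarith [hkey]
    exact_mod_cast this
  have hqmem : q ∈ Fset M := by
    rw [mem_Fset]
    refine ⟨?_, ?_, ?_, ?_⟩
    · exact_mod_cast (by rw [hq1]; exact hX1 : (1:ℤ) ≤ (q.1:ℤ))
    · exact_mod_cast (by rw [hq1, hq2]; exact hXY : (q.1:ℤ) ≤ (q.2:ℤ))
    · exact_mod_cast (by rw [hq2]; exact hYub : (q.2:ℤ) ≤ (M:ℤ))
    · -- coprime
      have d1 : Nat.gcd q.1 q.2 ∣ h * q.2 + 1 := hdet ▸ (Nat.gcd_dvd_left q.1 q.2).mul_right k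
      have d2 : Nat.gcd q.1 q.2 ∣ h * q.2 := (Nat.gcd_dvd_right q.1 q.2).mul_left h
      have := Nat.dvd_sub d1 d2
      simpa using this
  have hsum : M < k + q.2 := by
    have : (M:ℤ) < k + q.2 := by rw [hq2]; omega
    exact_mod_cast this
  have hqden : (0:ℝ) < (q.2:ℝ) := den_posR hqmem
  have hpden : (0:ℝ) < (k:ℝ) := by exact_mod_cast hk0
  have hdet' : q.1 * p.2 = p.1 * q.2 + 1 := hdet
  have hvlt : v p < v q := by
    rw [v_lt_iff hpden hqden]
    omega
  refine ⟨q, ⟨hp, hqmem, hvlt, ?_⟩, hdet', hsum⟩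
  -- minimality
  intro r hr hvr
  by_contra hc
  push_neg at hc
  obtain ⟨r1, rle, rM, rg⟩ := mem_Fset.mp hr
  have hrden : (0:ℝ) < (r.2:ℝ) := den_posR hr
  have c1 : h * r.2 < r.1 * k := (v_lt_iff hpden hrden).mp hvr
  have c2 : r.1 * q.2 < q.1 * r.2 := (v_lt_iff hrden hqden).mp hc
  -- derive r.2 ≥ k + q.2 > M, contradiction
  have hZ : (r.2 : ℤ) = (q.2:ℤ) * ((r.1:ℤ) * k - h * r.2) + k * ((q.1:ℤ) * r.2 - r.1 * q.2) := by
    have hdetZ : (q.1:ℤ) * k = (h:ℤ) * q.2 + 1 := by exact_mod_cast hdet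
    linear_combination -(r.2 : ℤ) * hdetZ
  have e1 : (1:ℤ) ≤ (r.1:ℤ) * k - h * r.2 := by
    have : (h * r.2 : ℤ) < (r.1 * k : ℤ) := by exact_mod_cast c1
    omega
  have e2 : (1:ℤ) ≤ (q.1:ℤ) * r.2 - r.1 * q.2 := by
    have : (r.1 * q.2 : ℤ) < (q.1 * r.2 : ℤ) := by exact_mod_cast c2
    omega
  have hrM : (r.2:ℤ) ≤ M := by exact_mod_cast rM
  have hq2' : (1:ℤ) ≤ (q.2:ℤ) := by rw [hq2]; omega
  have hsum' : (M:ℤ) < (k:ℤ) + q.2 := by exact_mod_cast hsum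
  have t1 : (q.2:ℤ) * 1 ≤ (q.2:ℤ) * ((r.1:ℤ) * k - h * r.2) :=
    mul_le_mul_of_nonneg_left e1 (by omega)
  have t2 : (k:ℤ) * 1 ≤ (k:ℤ) * ((q.1:ℤ) * r.2 - r.1 * q.2) :=
    mul_le_mul_of_nonneg_left e2 (by positivity)
  have hkZ' : (1:ℤ) ≤ (k:ℤ) := by exact_mod_cast hk0
  linarith [hZ, t1, t2, hrM, hsum', hq2', hkZ']


lemma adj_pred_form {M : ℕ} {p q : ℕ × ℕ} (h : adj M p q) :
    ∀ r ∈ Fset M, v r < v q → v r ≤ v p := by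
  intro r hr hrq
  by_contra hc
  push_neg at hc
  exact absurd (h.2.2.2 r hr hc) (not_le.mpr hrq)

lemma succ_unique {M : ℕ} {p q q' : ℕ × ℕ} (h : adj M p q) (h' : adj M p q') : q = q' := by
  have h1 : v q ≤ v q' := h.2.2.2 q' h'.2.1 h'.2.2.1
  have h2 : v q' ≤ v q := h'.2.2.2 q h.2.1 h.2.2.1
  exact v_inj h.2.1 h'.2.1 (le_antisymm h1 h2)

lemma pred_unique {M : ℕ} {p p' q : ℕ × ℕ} (h : adj M p q) (h' : adj M p' q) : p = p' := by
  have h1 : v p ≤ v p' := adj_pred_form h' p h.1 h.2.2.1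
  have h2 : v p' ≤ v p := adj_pred_form h p' h'.1 h'.2.2.1
  exact v_inj h.1 h'.1 (le_antisymm h1 h2)

lemma exists_pred {M : ℕ} {q : ℕ × ℕ} (hq : q ∈ Fset M)
    (hne : ∃ r ∈ Fset M, v r < v q) : ∃ p, adj M p q := by
  classical
  set S := (Fset M).filter (fun r => v r < v q) with hS
  have hSne : S.Nonempty := by
    obtain ⟨r, hr, hrv⟩ := hne
    exact ⟨r, Finset.mem_filter.mpr ⟨hr, hrv⟩⟩
  obtain ⟨p, hpS, hmax⟩ := Finset.exists_max_image S v hSne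
  obtain ⟨hpF, hpv⟩ := Finset.mem_filter.mp hpS
  refine ⟨p, hpF, hq, hpv, ?_⟩
  intro r hr hpr
  by_contra hc
  push_neg at hc
  have : r ∈ S := Finset.mem_filter.mpr ⟨hr, hc⟩
  exact absurd (hmax r this) (not_le.mpr hpr)

noncomputable def mediant (p q : ℕ × ℕ) : ℝ := ((p.1 : ℝ) + q.1) / ((p.2 : ℝ) + q.2)

open Classical in
noncomputable def rho2 (M : ℕ) (p : ℕ × ℕ) : ℝ :=
  if h : ∃ q, adj M p q then mediant p h.choose else ((M:ℝ) + 2) / ((M:ℝ) + 1)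

open Classical in
noncomputable def rho1 (M : ℕ) (p : ℕ × ℕ) : ℝ :=
  if h : ∃ q, adj M q p then mediant h.choose p else 1 / ((M:ℝ) + 1)

lemma rho2_eq_of_adj {M : ℕ} {p q : ℕ × ℕ} (h : adj M p q) : rho2 M p = mediant p q := by
  have hex : ∃ q, adj M p q := ⟨q, h⟩
  rw [rho2, dif_pos hex, succ_unique hex.choose_spec h]

lemma rho1_eq_of_adj {M : ℕ} {p q : ℕ × ℕ} (h : adj M p q) : rho1 M q = mediant p q := by
  have hex : ∃ p, adj M p q := ⟨p, h⟩
  rw [rho1, dif_pos hex, pred_unique hex.choose_spec h]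

lemma eq_one_one {M : ℕ} {p : ℕ × ℕ} (hp : p ∈ Fset M) (he : p.1 = p.2) : p = (1, 1) := by
  obtain ⟨a, b, c, g⟩ := mem_Fset.mp hp
  rw [he, Nat.gcd_self] at g
  exact Prod.ext (by omega) (by omega)

lemma v_one_one : v (1, 1) = 1 := by norm_num [v]

lemma rho2_max {M : ℕ} : rho2 M (1, 1) = ((M:ℝ) + 2) / ((M:ℝ) + 1) := by
  rw [rho2, dif_neg]
  rintro ⟨q, hq⟩
  exact absurd (lt_of_lt_of_le (v_one_one ▸ hq.2.2.1) (v_le_one hq.2.1)) (lt_irrefl 1)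

lemma mem_one_M {M : ℕ} (hM : 1 ≤ M) : ((1 : ℕ), M) ∈ Fset M :=
  mem_Fset.mpr ⟨le_refl 1, hM, le_refl M, Nat.gcd_one_left M⟩

lemma v_one_M {M : ℕ} : v (1, M) = 1 / (M:ℝ) := by simp [v]

lemma rho1_min {M : ℕ} : rho1 M (1, M) = 1 / ((M:ℝ) + 1) := by
  rw [rho1, dif_neg]
  rintro ⟨q, hq⟩
  exact absurd (lt_of_le_of_lt (one_div_M_le_v hq.1) (v_one_M ▸ hq.2.2.1)) (lt_irrefl _)


lemma adj_lt {M : ℕ} {p q : ℕ × ℕ} (h : adj M p q) : p.1 < p.2 := by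
  obtain ⟨a, b, _, _⟩ := mem_Fset.mp h.1
  rcases lt_or_eq_of_le b with h' | h'
  · exact h'
  · exfalso
    have h1 : v p = 1 := by rw [eq_one_one h.1 h', v_one_one]
    exact absurd (v_le_one h.2.1) (not_le.mpr (h1 ▸ h.2.2.1))

lemma adj_prop {M : ℕ} (hM : 1 ≤ M) {p q : ℕ × ℕ} (h : adj M p q) :
    q.1 * p.2 = p.1 * q.2 + 1 ∧ M < p.2 + q.2 := by
  have hlt : p.1 < p.2 := adj_lt h
  obtain ⟨q', hadj', hdet, hsum⟩ := exists_succ hM h.1 hlt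
  rw [succ_unique h hadj']
  exact ⟨hdet, hsum⟩

lemma mediant_facts {M : ℕ} (hM : 1 ≤ M) {p q : ℕ × ℕ} (h : adj M p q) :
    v p < mediant p q ∧ mediant p q < v q ∧
    mediant p q - v p = 1 / ((p.2 : ℝ) * ((p.2 : ℝ) + q.2)) ∧
    v q - mediant p q = 1 / ((q.2 : ℝ) * ((p.2 : ℝ) + q.2)) := by
  obtain ⟨hdet, _⟩ := adj_prop hM h
  have hp2 : (0:ℝ) < (p.2:ℝ) := den_posR h.1
  have hq2 : (0:ℝ) < (q.2:ℝ) := den_posR h.2.1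
  have hs : (0:ℝ) < (p.2:ℝ) + q.2 := by linarith
  have hdetR : (q.1:ℝ) * p.2 = (p.1:ℝ) * q.2 + 1 := by exact_mod_cast hdet
  have hnum : (q.1:ℝ) * p.2 - (p.1:ℝ) * q.2 = 1 := by linarith
  have e1 : mediant p q - v p = 1 / ((p.2 : ℝ) * ((p.2 : ℝ) + q.2)) := by
    have : mediant p q - v p =
        ((q.1:ℝ) * p.2 - (p.1:ℝ) * q.2) / ((p.2 : ℝ) * ((p.2 : ℝ) + q.2)) := by
      rw [mediant, v]
      field_simp
      ring
    rw [this, hnum]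
  have e2 : v q - mediant p q = 1 / ((q.2 : ℝ) * ((p.2 : ℝ) + q.2)) := by
    have : v q - mediant p q =
        ((q.1:ℝ) * p.2 - (p.1:ℝ) * q.2) / ((q.2 : ℝ) * ((p.2 : ℝ) + q.2)) := by
      rw [mediant, v]
      field_simp
      ring
    rw [this, hnum]
  refine ⟨?_, ?_, e1, e2⟩
  · have : (0:ℝ) < 1 / ((p.2 : ℝ) * ((p.2 : ℝ) + q.2)) := by positivity
    linarith [e1]
  · have : (0:ℝ) < 1 / ((q.2 : ℝ) * ((p.2 : ℝ) + q.2)) := by positivity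
    linarith [e2]

lemma bound_helper {M k : ℕ} (hM : 1 ≤ M) (hk : 1 ≤ k) {s : ℝ}
    (h1 : (M:ℝ) + 1 ≤ s) (h2 : s ≤ 2 * M) :
    1 / (2 * (M:ℝ) * k) ≤ 1 / ((k:ℝ) * s) ∧ 1 / ((k:ℝ) * s) ≤ 1 / (((M:ℝ) + 1) * k) := by
  have hMR : (1:ℝ) ≤ (M:ℝ) := by exact_mod_cast hM
  have hkR : (1:ℝ) ≤ (k:ℝ) := by exact_mod_cast hk
  have hs0 : (0:ℝ) < s := by linarith
  constructor
  · apply one_div_le_one_div_of_le (by positivity)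
    nlinarith
  · apply one_div_le_one_div_of_le (by positivity)
    nlinarith

lemma sum_le_2M {M : ℕ} {p q : ℕ × ℕ} (hp : p ∈ Fset M) (hq : q ∈ Fset M) :
    (p.2 : ℝ) + (q.2 : ℝ) ≤ 2 * M := by
  obtain ⟨_, _, c1, _⟩ := mem_Fset.mp hp
  obtain ⟨_, _, c2, _⟩ := mem_Fset.mp hq
  have : p.2 + q.2 ≤ 2 * M := by omega
  exact_mod_cast this

lemma sum_ge_M1 {M : ℕ} (hM : 1 ≤ M) {p q : ℕ × ℕ} (h : adj M p q) :
    (M:ℝ) + 1 ≤ (p.2 : ℝ) + (q.2 : ℝ) := by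
  have := (adj_prop hM h).2
  have : M + 1 ≤ p.2 + q.2 := this
  exact_mod_cast this

/-- Left-side bounds. -/
lemma rho1_bounds {M : ℕ} (hM : 1 ≤ M) {p : ℕ × ℕ} (hp : p ∈ Fset M) :
    1 / (2 * (M:ℝ) * p.2) ≤ v p - rho1 M p ∧ v p - rho1 M p ≤ 1 / (((M:ℝ) + 1) * p.2) := by
  obtain ⟨a1, _, _, _⟩ := mem_Fset.mp hp
  by_cases hex : ∃ q, adj M q p
  · obtain ⟨q, hq⟩ := hex
    rw [rho1_eq_of_adj hq]
    obtain ⟨_, _, _, e2⟩ := mediant_facts hM hq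
    rw [e2]
    exact bound_helper hM (by omega : 1 ≤ p.2) (sum_ge_M1 hM hq) (sum_le_2M hq.1 hq.2.1)
  · -- p is the minimum, hence p = (1, M)
    have hpm : p = (1, M) := by
      apply v_inj hp (mem_one_M hM)
      rw [v_one_M]
      refine le_antisymm ?_ (one_div_M_le_v hp)
      by_contra hc
      push_neg at hc
      exact hex (exists_pred hp ⟨(1, M), mem_one_M hM, v_one_M ▸ hc⟩)
    rw [rho1, dif_neg hex, hpm]
    have hMR : (1:ℝ) ≤ (M:ℝ) := by exact_mod_cast hM
    have he : v (1, M) - 1 / ((M:ℝ) + 1) = 1 / ((M:ℝ) * ((M:ℝ) + 1)) := by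
      rw [v_one_M]
      field_simp
      ring
    rw [he]
    have := bound_helper hM hM (le_refl ((M:ℝ) + 1)) (by linarith : (M:ℝ) + 1 ≤ 2 * M)
    simpa using this

/-- Right-side bounds. -/
lemma rho2_bounds {M : ℕ} (hM : 1 ≤ M) {p : ℕ × ℕ} (hp : p ∈ Fset M) :
    1 / (2 * (M:ℝ) * p.2) ≤ rho2 M p - v p ∧ rho2 M p - v p ≤ 1 / (((M:ℝ) + 1) * p.2) := by
  obtain ⟨a1, a2, _, _⟩ := mem_Fset.mp hp
  rcases lt_or_eq_of_le a2 with hlt | heq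
  · obtain ⟨q, hadj, _, _⟩ := exists_succ hM hp hlt
    rw [rho2_eq_of_adj hadj]
    obtain ⟨_, _, e1, _⟩ := mediant_facts hM hadj
    rw [e1]
    exact bound_helper hM (by omega : 1 ≤ p.2) (sum_ge_M1 hM hadj) (sum_le_2M hp hadj.2.1)
  · have hpm : p = (1, 1) := eq_one_one hp heq
    rw [hpm, rho2_max, v_one_one]
    have hMR : (1:ℝ) ≤ (M:ℝ) := by exact_mod_cast hM
    have he : ((M:ℝ) + 2) / ((M:ℝ) + 1) - 1 = 1 / (1 * ((M:ℝ) + 1)) := by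
      field_simp
      norm_num
    rw [he]
    have := bound_helper hM le_rfl (le_refl ((M:ℝ) + 1)) (by linarith : (M:ℝ) + 1 ≤ 2 * M)
    simpa using this

/-- Separation: if `v p < v q` then `ρ₂ p ≤ ρ₁ q`. -/
lemma sep {M : ℕ} (hM : 1 ≤ M) {p q : ℕ × ℕ} (hp : p ∈ Fset M) (hq : q ∈ Fset M)
    (hv : v p < v q) : rho2 M p ≤ rho1 M q := by
  have hplt : p.1 < p.2 := by
    obtain ⟨a, b, _, _⟩ := mem_Fset.mp hp
    rcases lt_or_eq_of_le b with h' | h'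
    · exact h'
    · exfalso
      have h1 : v p = 1 := by rw [eq_one_one hp h', v_one_one]
      exact absurd (v_le_one hq) (not_le.mpr (h1 ▸ hv))
  obtain ⟨s, hadj, _, _⟩ := exists_succ hM hp hplt
  have hsq : v s ≤ v q := hadj.2.2.2 q hq hv
  rcases eq_or_lt_of_le hsq with he | hlt
  · have hsq' : s = q := v_inj hadj.2.1 hq he
    subst hsq'
    rw [rho2_eq_of_adj hadj, rho1_eq_of_adj hadj]
  · obtain ⟨r, hr⟩ := exists_pred hq ⟨s, hadj.2.1, hlt⟩
    have hsr : v s ≤ v r := adj_pred_form hr s hadj.2.1 hlt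
    rw [rho2_eq_of_adj hadj, rho1_eq_of_adj hr]
    have m1 := (mediant_facts hM hadj).2.1
    have m2 := (mediant_facts hM hr).1
    linarith

lemma rho1_ge {M : ℕ} (hM : 1 ≤ M) {p : ℕ × ℕ} (hp : p ∈ Fset M) :
    1 / ((M:ℝ) + 1) ≤ rho1 M p := by
  have hMR : (1:ℝ) ≤ (M:ℝ) := by exact_mod_cast hM
  by_cases hex : ∃ q, adj M q p
  · obtain ⟨q, hq⟩ := hex
    rw [rho1_eq_of_adj hq]
    have m := (mediant_facts hM hq).1
    have := one_div_M_le_v hq.1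
    have h2 : 1 / ((M:ℝ) + 1) ≤ 1 / (M:ℝ) :=
      one_div_le_one_div_of_le (by linarith) (by linarith)
    linarith
  · rw [rho1, dif_neg hex]

lemma rho2_le {M : ℕ} (hM : 1 ≤ M) {p : ℕ × ℕ} (hp : p ∈ Fset M) :
    rho2 M p ≤ ((M:ℝ) + 2) / ((M:ℝ) + 1) := by
  have hMR : (1:ℝ) ≤ (M:ℝ) := by exact_mod_cast hM
  by_cases hex : ∃ q, adj M p q
  · obtain ⟨q, hq⟩ := hex
    rw [rho2_eq_of_adj hq]
    have m := (mediant_facts hM hq).2.1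
    have h1 : v q ≤ 1 := v_le_one hq.2.1
    have h2 : (1:ℝ) ≤ ((M:ℝ) + 2) / ((M:ℝ) + 1) := by
      rw [le_div_iff₀ (by linarith)]
      linarith
    linarith
  · rw [rho2, dif_neg hex]

end FareyAux

open FareyAux in
/-- Farey decomposition of the interval `[1/(M+1), (M+2)/(M+1))` into half-open
intervals `I_M(h/k) = [ρ₁(h,k), ρ₂(h,k))` around the reduced fractions `h/k`,
`1 ≤ h ≤ k ≤ M`, `gcd(h,k) = 1`. -/
theorem farey_decomposition (M : ℕ) (hM : 1 ≤ M) :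
    ∃ ρ₁ ρ₂ : ℕ × ℕ → ℝ,
      (∀ p ∈ (Finset.Icc 1 M ×ˢ Finset.Icc 1 M).filter
          (fun p : ℕ × ℕ => p.1 ≤ p.2 ∧ Nat.gcd p.1 p.2 = 1),
        (p.1 : ℝ) / (p.2 : ℝ) ∈ Set.Ico (ρ₁ p) (ρ₂ p) ∧
        (1 : ℝ) / (2 * M * p.2) ≤ (p.1 : ℝ) / (p.2 : ℝ) - ρ₁ p ∧
        (p.1 : ℝ) / (p.2 : ℝ) - ρ₁ p ≤ 1 / ((M + 1) * p.2) ∧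
        (1 : ℝ) / (2 * M * p.2) ≤ ρ₂ p - (p.1 : ℝ) / (p.2 : ℝ) ∧
        ρ₂ p - (p.1 : ℝ) / (p.2 : ℝ) ≤ 1 / ((M + 1) * p.2)) ∧
      (((Finset.Icc 1 M ×ˢ Finset.Icc 1 M).filter
          (fun p : ℕ × ℕ => p.1 ≤ p.2 ∧ Nat.gcd p.1 p.2 = 1) : Finset (ℕ × ℕ)) :
          Set (ℕ × ℕ)).PairwiseDisjoint (fun p => Set.Ico (ρ₁ p) (ρ₂ p)) ∧
      (⋃ p ∈ (Finset.Icc 1 M ×ˢ Finset.Icc 1 M).filter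
          (fun p : ℕ × ℕ => p.1 ≤ p.2 ∧ Nat.gcd p.1 p.2 = 1),
        Set.Ico (ρ₁ p) (ρ₂ p)) = Set.Ico ((1 : ℝ) / (M + 1)) (((M : ℝ) + 2) / (M + 1)) := by
  
  classical
  have hFeq : (Finset.Icc 1 M ×ˢ Finset.Icc 1 M).filter
      (fun p : ℕ × ℕ => p.1 ≤ p.2 ∧ Nat.gcd p.1 p.2 = 1) = Fset M := rfl
  refine ⟨rho1 M, rho2 M, ?_, ?_, ?_⟩
  · rw [hFeq]
    intro p hp
    have hvp : v p = (p.1 : ℝ) / (p.2 : ℝ) := rfl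
    obtain ⟨b1, b2⟩ := rho1_bounds hM hp
    obtain ⟨b3, b4⟩ := rho2_bounds hM hp
    rw [hvp] at b1 b2 b3 b4
    have hpos : (0:ℝ) < 1 / (2 * (M:ℝ) * p.2) := by
      have := den_posR hp
      have hMR : (1:ℝ) ≤ (M:ℝ) := by exact_mod_cast hM
      positivity
    exact ⟨⟨by linarith, by linarith⟩, b1, b2, b3, b4⟩
  · rw [hFeq]
    intro p hp q hq hne
    have hp' : p ∈ Fset M := Finset.mem_coe.mp hp
    have hq' : q ∈ Fset M := Finset.mem_coe.mp hq
    have hvne : v p ≠ v q := fun h => hne (v_inj hp' hq' h)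
    have key : ∀ a b : ℕ × ℕ, a ∈ Fset M → b ∈ Fset M → v a < v b →
        Disjoint (Set.Ico (rho1 M a) (rho2 M a)) (Set.Ico (rho1 M b) (rho2 M b)) := by
      intro a b ha hb hv
      have := sep hM ha hb hv
      rw [Set.disjoint_left]
      rintro x ⟨_, hx2⟩ ⟨hx3, _⟩
      linarith
    rcases lt_or_gt_of_ne hvne with h | h
    · exact key p q hp' hq' h
    · exact (key q p hq' hp' h).symm
  · rw [hFeq]
    ext t
    simp only [Set.mem_iUnion, Set.mem_Ico, exists_prop]
    constructor
    · rintro ⟨p, hp, ht1, ht2⟩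
      have h1 := rho1_ge hM hp
      have h2 := rho2_le hM hp
      exact ⟨by linarith, by linarith⟩
    · rintro ⟨ht1, ht2⟩
      set S := (Fset M).filter (fun p => rho1 M p ≤ t) with hS
      have hSne : S.Nonempty := by
        refine ⟨(1, M), Finset.mem_filter.mpr ⟨mem_one_M hM, ?_⟩⟩
        rw [rho1_min]
        exact ht1
      obtain ⟨p, hpS, hmax⟩ := Finset.exists_max_image S v hSne
      obtain ⟨hpF, hpt⟩ := Finset.mem_filter.mp hpS
      refine ⟨p, hpF, hpt, ?_⟩
      obtain ⟨a1, a2, _, _⟩ := mem_Fset.mp hpF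
      rcases lt_or_eq_of_le a2 with hlt | heq
      · obtain ⟨q, hadj, _, _⟩ := exists_succ hM hpF hlt
        by_contra hc
        push_neg at hc
        have hq_in : q ∈ S := by
          refine Finset.mem_filter.mpr ⟨hadj.2.1, ?_⟩
          rw [rho1_eq_of_adj hadj, ← rho2_eq_of_adj hadj]
          exact hc
        exact absurd (hmax q hq_in) (not_le.mpr hadj.2.2.1)
      · rw [eq_one_one hpF heq, rho2_max]
        exact ht2
end
end

section
/- Let N ≥ 1 be an integer, let τ = iy with y ≥ 1 real, and let γ = [[a, b], [0, d]] ∈ C_N with d ≥ √(Ny). Set M = ⌊d/√(Ny)⌋ (so M ≥ 1). Let h, k, r, s be integers such that δ = [[s, r], [k, −h]] ∈ SL₂(ℤ), 1 ≤ k ≤ M, and |b/d − h/k| ≤ √(Ny)/(dk). Define τ̂ = δ(γ(τ)) (Möbius action). Then: (a) Im τ̂ ≥ 1/2; (b) Im τ̂ ≤ d²/(Nyk²); and (c) if moreover −1/2 < Re τ̂ ≤ 1/2, then Im τ̃_γ ≤ 4 Im τ̂, where τ̃_γ denotes the representative in 𝓕 of the SL₂(ℤ)-orbit of γ(τ). 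-/
open Complex

noncomputable section

open UpperHalfPlane
lemma moebius_eq (g : Matrix.SpecialLinearGroup (Fin 2) ℤ) (z : ℍ) :
    moebius g (z : ℂ) = ((g • z : ℍ) : ℂ) := by
  rw [UpperHalfPlane.specialLinearGroup_apply]
  simp [moebius]


set_option maxHeartbeats 1000000

/-- Estimates on `τ̂ = δ(γ(τ))` for `τ = iy`, `γ = [[a,b],[0,d]] ∈ C_N` with `d ≥ √(Ny)`,
`δ = [[s,r],[k,−h]] ∈ SL₂(ℤ)` and `1 ≤ k ≤ M = ⌊d/√(Ny)⌋`,
`|b/d − h/k| ≤ √(Ny)/(dk)`: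
(a) `Im τ̂ ≥ 1/2`; (b) `Im τ̂ ≤ d²/(Nyk²)`;
(c) if `−1/2 < Re τ̂ ≤ 1/2` then `Im τ̃_γ ≤ 4 Im τ̂`. -/
theorem tauhat_estimates (N : ℕ) (hN : 1 ≤ N) (y : ℝ) (hy : 1 ≤ y)
    (γ : ℕ × ℕ × ℕ) (hγ : γ ∈ CN N) (hd : Real.sqrt (N * y) ≤ (γ.2.2 : ℝ))
    (h k r s : ℤ) (hdet : s * (-h) - r * k = 1)
    (hk1 : 1 ≤ k) (hkM : k ≤ ⌊(γ.2.2 : ℝ) / Real.sqrt (N * y)⌋)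
    (hfarey : |(γ.2.1 : ℝ) / (γ.2.2 : ℝ) - (h : ℝ) / (k : ℝ)| ≤
      Real.sqrt (N * y) / ((γ.2.2 : ℝ) * (k : ℝ))) :
    (1 : ℝ) / 2 ≤ (((s : ℂ) * act γ ((y : ℂ) * Complex.I) + (r : ℂ)) /
        ((k : ℂ) * act γ ((y : ℂ) * Complex.I) - (h : ℂ))).im ∧
    (((s : ℂ) * act γ ((y : ℂ) * Complex.I) + (r : ℂ)) /
        ((k : ℂ) * act γ ((y : ℂ) * Complex.I) - (h : ℂ))).im ≤
      (γ.2.2 : ℝ) ^ 2 / ((N : ℝ) * y * (k : ℝ) ^ 2) ∧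
    (∀ w : ℂ, IsRep (act γ ((y : ℂ) * Complex.I)) w →
      -(1 / 2 : ℝ) < (((s : ℂ) * act γ ((y : ℂ) * Complex.I) + (r : ℂ)) /
          ((k : ℂ) * act γ ((y : ℂ) * Complex.I) - (h : ℂ))).re →
      (((s : ℂ) * act γ ((y : ℂ) * Complex.I) + (r : ℂ)) /
          ((k : ℂ) * act γ ((y : ℂ) * Complex.I) - (h : ℂ))).re ≤ 1 / 2 →
      w.im ≤ 4 * (((s : ℂ) * act γ ((y : ℂ) * Complex.I) + (r : ℂ)) /
          ((k : ℂ) * act γ ((y : ℂ) * Complex.I) - (h : ℂ))).im) := by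
  -- Extract data from hγ
  simp only [CN, Finset.mem_filter] at hγ
  obtain ⟨-, hadN, ha1, hbd, -⟩ := hγ
  set a : ℕ := γ.1 with ha_def
  set b : ℕ := γ.2.1 with hb_def
  set d : ℕ := γ.2.2 with hd_def
  -- basic positivity
  have hy0 : (0:ℝ) < y := lt_of_lt_of_le one_pos hy
  have hN0 : (0:ℝ) < (N:ℝ) := by exact_mod_cast hN
  have hNy : (0:ℝ) < (N:ℝ) * y := mul_pos hN0 hy0
  set S : ℝ := Real.sqrt ((N:ℝ) * y) with hS_def
  have hS2 : S ^ 2 = (N:ℝ) * y := Real.sq_sqrt hNy.le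
  have hSpos : 0 < S := Real.sqrt_pos.mpr hNy
  have hd1 : 1 ≤ d := lt_of_le_of_lt (Nat.zero_le b) hbd
  have hDpos : (0:ℝ) < (d:ℝ) := by exact_mod_cast hd1
  have hApos : (0:ℝ) < (a:ℝ) := by exact_mod_cast ha1
  have hAD : (a:ℝ) * (d:ℝ) = (N:ℝ) := by exact_mod_cast hadN
  have hKpos : (0:ℝ) < (k:ℝ) := by exact_mod_cast hk1
  have hK1 : (1:ℝ) ≤ (k:ℝ) := by exact_mod_cast hk1
  -- the point z
  set z : ℂ := act γ ((y : ℂ) * Complex.I) with hz_def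
  have hzeq : z = ((((b:ℝ)/(d:ℝ)) : ℝ) : ℂ) + ((((a:ℝ)*y/(d:ℝ)) : ℝ) : ℂ) * Complex.I := by
    rw [hz_def]
    simp only [act]
    have hd0 : ((d:ℝ):ℂ) ≠ 0 := by exact_mod_cast hDpos.ne'
    push_cast
    field_simp
    ring
  have hzre : z.re = (b:ℝ)/(d:ℝ) := by rw [hzeq]; simp
  have hzim : z.im = (a:ℝ)*y/(d:ℝ) := by rw [hzeq]; simp
  have hzim_pos : 0 < z.im := by rw [hzim]; positivity
  set Z : ℍ := ⟨z, hzim_pos⟩ with hZ_def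
  have hZcoe : (Z : ℂ) = z := rfl
  -- the matrix δ
  set δ : Matrix.SpecialLinearGroup (Fin 2) ℤ :=
    ⟨!![s, r; k, -h], by rw [Matrix.det_fin_two_of]; linarith⟩ with hδ_def
  set T : ℍ := δ • Z with hT_def
  set E : ℂ := ((s : ℂ) * z + (r : ℂ)) / ((k : ℂ) * z - (h : ℂ)) with hE_def
  have hE : E = (T : ℂ) := by
    rw [hT_def, ← moebius_eq, hZcoe, hE_def]
    simp only [moebius, hδ_def]
    norm_num [Matrix.cons_val_zero, Matrix.cons_val_one, Matrix.head_cons]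
    rw [sub_eq_add_neg]
  have hEim : E.im = T.im := by rw [hE]; exact UpperHalfPlane.coe_im T
  have hEre : E.re = T.re := by rw [hE]; exact UpperHalfPlane.coe_re T
  -- denom and its normSq
  have hden : denom δ Z = (k:ℂ) * z - (h:ℂ) := by
    rw [ModularGroup.denom_apply]
    simp [hδ_def, hZcoe]
    push_cast
    ring
  set V : ℝ := (a:ℝ) * y / (d:ℝ) with hV_def
  have hVpos : 0 < V := by rw [hV_def]; positivity
  have hQ : Complex.normSq (denom δ Z) = ((k:ℝ)*((b:ℝ)/(d:ℝ)) - (h:ℝ))^2 + ((k:ℝ)*V)^2 := by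
    rw [hden, Complex.normSq_apply]
    simp only [Complex.sub_re, Complex.sub_im, Complex.mul_re, Complex.mul_im,
      Complex.intCast_re, Complex.intCast_im, hzre, hzim, hV_def]
    ring
  set Q : ℝ := Complex.normSq (denom δ Z) with hQ_def
  have hTim : T.im = V / Q := by
    have hZim : Z.im = V := hzim
    rw [hT_def, ModularGroup.im_smul_eq_div_normSq, hZim]
  -- key real inequalities
  have hVS : V = S^2 / (d:ℝ)^2 := by
    rw [hV_def, hS2, ← hAD]; field_simp
  have hKDS : (k:ℝ) ≤ (d:ℝ) / S := by
    calc (k:ℝ) ≤ (⌊(d:ℝ) / S⌋ : ℝ) := by exact_mod_cast hkM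
    _ ≤ (d:ℝ) / S := Int.floor_le _
  have h1 : ((k:ℝ)*((b:ℝ)/(d:ℝ)) - (h:ℝ))^2 ≤ V := by
    have hu := abs_le.mp hfarey
    have husq : ((b:ℝ)/(d:ℝ) - (h:ℝ)/(k:ℝ))^2 ≤ (S/((d:ℝ)*(k:ℝ)))^2 := sq_le_sq' hu.1 hu.2
    have hweq : (k:ℝ)*((b:ℝ)/(d:ℝ)) - (h:ℝ) = (k:ℝ) * ((b:ℝ)/(d:ℝ) - (h:ℝ)/(k:ℝ)) := by
      field_simp
    rw [hweq]
    calc ((k:ℝ) * ((b:ℝ)/(d:ℝ) - (h:ℝ)/(k:ℝ)))^2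
        = (k:ℝ)^2 * ((b:ℝ)/(d:ℝ) - (h:ℝ)/(k:ℝ))^2 := by ring
      _ ≤ (k:ℝ)^2 * (S/((d:ℝ)*(k:ℝ)))^2 := mul_le_mul_of_nonneg_left husq (sq_nonneg _)
      _ = V := by
          rw [hVS]
          field_simp
  have h2 : (k:ℝ) * V ≤ S / (d:ℝ) := by
    calc (k:ℝ) * V ≤ ((d:ℝ)/S) * (S^2/(d:ℝ)^2) := by
          rw [hVS]; exact mul_le_mul_of_nonneg_right hKDS (by positivity)
    _ = S / (d:ℝ) := by field_simp
  have h2' : ((k:ℝ) * V)^2 ≤ V := by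
    have : ((k:ℝ)*V)^2 ≤ (S/(d:ℝ))^2 := by nlinarith [mul_pos hKpos hVpos]
    calc ((k:ℝ)*V)^2 ≤ (S/(d:ℝ))^2 := this
    _ = V := by rw [hVS, div_pow]
  have hQub : Q ≤ 2 * V := by rw [hQ]; linarith
  have hQlb : (k:ℝ)^2 * V^2 ≤ Q := by rw [hQ]; nlinarith [sq_nonneg ((k:ℝ)*((b:ℝ)/(d:ℝ)) - (h:ℝ))]
  have hQpos : 0 < Q := lt_of_lt_of_le (by positivity) hQlb
  -- part (a)
  have parta : (1:ℝ)/2 ≤ T.im := by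
    rw [hTim, le_div_iff₀ hQpos]; linarith
  -- part (b)
  have partb : T.im ≤ (d:ℝ)^2 / ((N:ℝ)*y*(k:ℝ)^2) := by
    rw [hTim]
    have hNyV : (N:ℝ)*y = V * (d:ℝ)^2 := by rw [hVS, ← hS2]; field_simp
    rw [div_le_div_iff₀ hQpos (by positivity)]
    rw [hNyV]
    nlinarith [mul_le_mul_of_nonneg_left hQlb (sq_nonneg (d:ℝ))]
  refine ⟨by rw [hEim]; exact parta, by rw [hEim]; exact partb, ?_⟩
  -- part (c)
  intro w hw _ _
  rw [hEim]
  obtain ⟨-, g, hg⟩ := hw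
  rw [← hZcoe, moebius_eq] at hg
  set g' : Matrix.SpecialLinearGroup (Fin 2) ℤ := g * δ⁻¹ with hg'_def
  have hcomp : g' • T = g • Z := by rw [hg'_def, hT_def, mul_smul, inv_smul_smul]
  have hwim : w.im = T.im / Complex.normSq (denom g' T) := by
    rw [← hg, ← hcomp, ← UpperHalfPlane.coe_im]
    exact ModularGroup.im_smul_eq_div_normSq g' T
  obtain ⟨c, hc_def⟩ : ∃ c : ℤ, (g' : Matrix (Fin 2) (Fin 2) ℤ) 1 0 = c := ⟨_, rfl⟩
  obtain ⟨e, he_def⟩ : ∃ e : ℤ, (g' : Matrix (Fin 2) (Fin 2) ℤ) 1 1 = e := ⟨_, rfl⟩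
  have hden' : denom g' T = (c:ℂ) * (T:ℂ) + (e:ℂ) := by
    rw [ModularGroup.denom_apply, hc_def, he_def]
  have hQQ : Complex.normSq (denom g' T) = ((c:ℝ)*T.re + (e:ℝ))^2 + ((c:ℝ)*T.im)^2 := by
    rw [hden', Complex.normSq_apply]
    simp only [Complex.add_re, Complex.add_im, Complex.mul_re, Complex.mul_im,
      Complex.intCast_re, Complex.intCast_im, UpperHalfPlane.coe_re, UpperHalfPlane.coe_im]
    ring
  clear_value g' δ T Z z E Q S V
  have hQQlb : 1/4 ≤ Complex.normSq (denom g' T) := by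
    rw [hQQ]
    rcases eq_or_ne c 0 with hc0 | hc0
    · -- c = 0: e = ±1
      have hdet' : (g' : Matrix (Fin 2) (Fin 2) ℤ) 0 0 * e - (g' : Matrix (Fin 2) (Fin 2) ℤ) 0 1 * c = 1 := by
        rw [← hc_def, ← he_def, ← Matrix.det_fin_two]
        exact g'.prop
      rw [hc0] at hdet'
      simp only [mul_zero, sub_zero] at hdet'
      have he1 : e = 1 ∨ e = -1 :=
        Int.isUnit_iff.mp (IsUnit.of_mul_eq_one (a := e) _ (by rw [mul_comm]; exact hdet'))
      have he2 : ((e:ℝ))^2 = 1 := by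
        rcases he1 with he | he <;> rw [he] <;> norm_num
      have hcr : ((c:ℝ)) = 0 := by exact_mod_cast congrArg (Int.cast : ℤ → ℝ) hc0
      rw [hcr]
      have hz0 : ((0:ℝ)*T.re + (e:ℝ))^2 + ((0:ℝ)*T.im)^2 = ((e:ℝ))^2 := by ring
      rw [hz0, he2]
      norm_num
    · -- c ≠ 0
      have hc1 : (1:ℝ) ≤ ((c:ℝ))^2 := by
        have hcz : 1 ≤ c^2 := by rcases hc0.lt_or_gt with h' | h' <;> nlinarith
        exact_mod_cast hcz
      have hTim2 : (1/4:ℝ) ≤ T.im^2 := by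
        have hmul := mul_le_mul parta parta (by norm_num) (by linarith)
        calc (1/4:ℝ) = (1/2)*(1/2) := by norm_num
          _ ≤ T.im * T.im := hmul
          _ = T.im^2 := (sq T.im).symm
      have h5 : T.im^2 ≤ (c:ℝ)^2 * T.im^2 := le_mul_of_one_le_left (sq_nonneg _) hc1
      have hsq : ((c:ℝ)*T.im)^2 = (c:ℝ)^2 * T.im^2 := by ring
      linarith [sq_nonneg ((c:ℝ)*T.re + (e:ℝ)), h5, hTim2, hsq.ge, hsq.le]
  have hTimpos : 0 < T.im := T.2
  rw [hwim]
  rw [div_le_iff₀ (lt_of_lt_of_le (by norm_num) hQQlb)]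
  linarith [mul_le_mul_of_nonneg_left hQQlb (le_of_lt hTimpos)]
end
end

section
/- Define ψ̃(N) = ∑_{d | N} φ(gcd(d, N/d)), where φ is Euler's totient function. Then ψ̃ is a multiplicative arithmetic function; for every prime p and integer k ≥ 1, ψ̃(p^k) = 2 p^{(k−1)/2} if k is odd and ψ̃(p^k) = (1 + 1/p) p^{k/2} if k is even; and for every integer N ≥ 1, ψ̃(N) ≤ ψ(N)/√N. -/
open Complex

noncomputable section

/-- `ψ̃(N) = ∑_{d ∣ N} φ(gcd(d, N/d))`. -/
def psiTilde (N : ℕ) : ℕ := ∑ d ∈ N.divisors, Nat.totient (Nat.gcd d (N / d))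


section PsiTildeAux

open Finset

lemma myGcdPowPow (p i j : ℕ) : Nat.gcd (p ^ i) (p ^ j) = p ^ min i j := by
  rcases le_total i j with h | h
  · rw [Nat.gcd_eq_left (pow_dvd_pow p h), min_eq_left h]
  · rw [Nat.gcd_eq_right (pow_dvd_pow p h), min_eq_right h]

lemma mySumTotientPow {p : ℕ} (hp : p.Prime) (m : ℕ) :
    ∑ i ∈ range (m + 1), Nat.totient (p ^ i) = p ^ m := by
  rw [← Nat.sum_divisors_prime_pow hp]
  exact Nat.sum_totient _

lemma myPsiTildePrimePow {p k : ℕ} (hp : p.Prime) (hk : 1 ≤ k) :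
    psiTilde (p ^ k) = p ^ ((k - 1) / 2) + p ^ (k / 2) := by
  unfold psiTilde
  rw [Nat.sum_divisors_prime_pow hp]
  have h1 : ∀ i ∈ range (k + 1),
      Nat.totient (Nat.gcd (p ^ i) (p ^ k / p ^ i)) = Nat.totient (p ^ min i (k - i)) := by
    intro i hi
    rw [mem_range] at hi
    rw [Nat.pow_div (by omega) hp.pos, myGcdPowPow]
  rw [Finset.sum_congr rfl h1, range_eq_Ico,
    ← Finset.sum_Ico_consecutive _ (Nat.zero_le ((k + 1) / 2)) (by omega : (k + 1) / 2 ≤ k + 1)]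
  have e1 : ∑ i ∈ Ico 0 ((k + 1) / 2), Nat.totient (p ^ min i (k - i)) = p ^ ((k - 1) / 2) := by
    rw [← mySumTotientPow hp ((k - 1) / 2), ← Nat.Ico_zero_eq_range,
      show (k + 1) / 2 = (k - 1) / 2 + 1 by omega]
    refine Finset.sum_congr rfl fun i hi => ?_
    rw [Finset.mem_Ico] at hi
    rw [min_eq_left (by omega)]
  have e2 : ∑ i ∈ Ico ((k + 1) / 2) (k + 1), Nat.totient (p ^ min i (k - i)) = p ^ (k / 2) := by
    have h2 : ∀ i ∈ Ico ((k + 1) / 2) (k + 1),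
        Nat.totient (p ^ min i (k - i)) = Nat.totient (p ^ (k - i)) := by
      intro i hi
      rw [Finset.mem_Ico] at hi
      rw [min_eq_right (by omega)]
    rw [Finset.sum_congr rfl h2,
      Finset.sum_Ico_reflect (fun j => Nat.totient (p ^ j)) _ (by omega : k + 1 ≤ k + 1),
      show k + 1 - (k + 1) = 0 by omega, show k + 1 - (k + 1) / 2 = k / 2 + 1 by omega,
      Nat.Ico_zero_eq_range, mySumTotientPow hp]
  rw [e1, e2]

lemma myGcdMulSplit {x y d1 d2 : ℕ} (hxy : Nat.Coprime x y) (h1y : Nat.Coprime d1 y)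
    (h2x : Nat.Coprime d2 x) :
    Nat.gcd (d1 * d2) (x * y) = Nat.gcd d1 x * Nat.gcd d2 y := by
  apply Nat.dvd_antisymm
  · set g := Nat.gcd (d1 * d2) (x * y) with hg
    have hgxy : g ∣ x * y := Nat.gcd_dvd_right _ _
    have hgd : g ∣ d1 * d2 := Nat.gcd_dvd_left _ _
    have key : Nat.gcd g x * Nat.gcd g y = g :=
      (Nat.gcd_mul_gcd_eq_iff_dvd_mul_of_coprime hxy).mpr hgxy
    have h1 : Nat.gcd g x ∣ Nat.gcd d1 x := by
      refine Nat.dvd_gcd ?_ (Nat.gcd_dvd_right _ _)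
      exact (Nat.Coprime.coprime_dvd_left (Nat.gcd_dvd_right g x) h2x.symm).dvd_of_dvd_mul_right
        ((Nat.gcd_dvd_left _ _).trans hgd)
    have h2 : Nat.gcd g y ∣ Nat.gcd d2 y := by
      refine Nat.dvd_gcd ?_ (Nat.gcd_dvd_right _ _)
      exact (Nat.Coprime.coprime_dvd_left (Nat.gcd_dvd_right g y) h1y.symm).dvd_of_dvd_mul_left
        ((Nat.gcd_dvd_left _ _).trans hgd)
    exact key ▸ mul_dvd_mul h1 h2
  · exact Nat.dvd_gcd (mul_dvd_mul (Nat.gcd_dvd_left _ _) (Nat.gcd_dvd_left _ _))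
      (mul_dvd_mul (Nat.gcd_dvd_right _ _) (Nat.gcd_dvd_right _ _))

lemma myPsiTildeMul {a b : ℕ} (ha : a ≠ 0) (hb : b ≠ 0) (hab : Nat.Coprime a b) :
    psiTilde (a * b) = psiTilde a * psiTilde b := by
  unfold psiTilde
  rw [Finset.sum_mul_sum, ← Finset.sum_product']
  refine Finset.sum_nbij' (fun d => (Nat.gcd d a, Nat.gcd d b)) (fun q => q.1 * q.2)
    ?_ ?_ ?_ ?_ ?_
  · intro d hd
    simp only [Finset.mem_product, Nat.mem_divisors]
    exact ⟨⟨Nat.gcd_dvd_right _ _, ha⟩, ⟨Nat.gcd_dvd_right _ _, hb⟩⟩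
  · intro q hq
    simp only [Finset.mem_product, Nat.mem_divisors] at hq
    exact Nat.mem_divisors.mpr ⟨mul_dvd_mul hq.1.1 hq.2.1, mul_ne_zero ha hb⟩
  · intro d hd
    exact (Nat.gcd_mul_gcd_eq_iff_dvd_mul_of_coprime hab).mpr (Nat.mem_divisors.mp hd).1
  · intro q hq
    simp only [Finset.mem_product, Nat.mem_divisors] at hq
    have hq1 : Nat.gcd (q.1 * q.2) a = q.1 := by
      rw [mul_comm]
      exact Nat.gcd_mul_of_coprime_of_dvd (hab.symm.coprime_dvd_left hq.2.1) hq.1.1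
    have hq2 : Nat.gcd (q.1 * q.2) b = q.2 :=
      Nat.gcd_mul_of_coprime_of_dvd (hab.coprime_dvd_left hq.1.1) hq.2.1
    exact Prod.ext hq1 hq2
  · intro d hd
    have hdab : d ∣ a * b := (Nat.mem_divisors.mp hd).1
    set d1 := Nat.gcd d a with hd1def
    set d2 := Nat.gcd d b with hd2def
    have hd1 : d1 ∣ a := Nat.gcd_dvd_right _ _
    have hd2 : d2 ∣ b := Nat.gcd_dvd_right _ _
    have hsplit : d1 * d2 = d := (Nat.gcd_mul_gcd_eq_iff_dvd_mul_of_coprime hab).mpr hdab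
    have hxa : a / d1 ∣ a := Nat.div_dvd_of_dvd hd1
    have hyb : b / d2 ∣ b := Nat.div_dvd_of_dvd hd2
    have hcop1 : Nat.Coprime (a / d1) (b / d2) :=
      (hab.coprime_dvd_left hxa).coprime_dvd_right hyb
    have hcop2 : Nat.Coprime d1 (b / d2) := (hab.coprime_dvd_left hd1).coprime_dvd_right hyb
    have hcop3 : Nat.Coprime d2 (a / d1) := (hab.symm.coprime_dvd_left hd2).coprime_dvd_right hxa
    have hcop4 : Nat.Coprime (Nat.gcd d1 (a / d1)) (Nat.gcd d2 (b / d2)) :=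
      (hab.coprime_dvd_left ((Nat.gcd_dvd_left _ _).trans hd1)).coprime_dvd_right
        ((Nat.gcd_dvd_left _ _).trans hd2)
    calc Nat.totient (Nat.gcd d (a * b / d))
        = Nat.totient (Nat.gcd (d1 * d2) (a / d1 * (b / d2))) := by
          rw [← hsplit, Nat.div_mul_div_comm hd1 hd2]
      _ = Nat.totient (Nat.gcd d1 (a / d1)) * Nat.totient (Nat.gcd d2 (b / d2)) := by
          rw [myGcdMulSplit hcop1 hcop2 hcop3, Nat.totient_mul hcop4]

lemma myPsiMul {a b : ℕ} (ha : a ≠ 0) (hb : b ≠ 0) (hab : Nat.Coprime a b) :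
    psi (a * b) = psi a * psi b := by
  unfold psi
  rw [hab.primeFactors_mul, Finset.prod_union hab.disjoint_primeFactors, Nat.cast_mul]
  ring

lemma myPsiTildeSqLe (N : ℕ) : ((psiTilde N : ℝ)) ^ 2 * N ≤ psi N ^ 2 := by
  induction N using Nat.recOnPosPrimePosCoprime with
  | zero => simp [psi, psiTilde]
  | one => norm_num [psi, psiTilde]
  | prime_pow p k hpp hk =>
      have hp : p.Prime := hpp
      have hp0 : (0 : ℝ) < p := by exact_mod_cast hp.pos
      have hp2 : (2 : ℝ) ≤ p := by exact_mod_cast hp.two_le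
      have hfac : (p ^ k).primeFactors = {p} := Nat.primeFactors_prime_pow (by omega) hp
      have hpsi : psi (p ^ k) = (p : ℝ) ^ k * (1 + (p : ℝ)⁻¹) := by
        unfold psi
        rw [hfac, Finset.prod_singleton]
        push_cast
        ring
      rw [hpsi, myPsiTildePrimePow hp (by omega)]
      rcases Nat.even_or_odd k with he | ho
      · obtain ⟨m, rfl⟩ := he
        obtain ⟨m', rfl⟩ : ∃ m', m = m' + 1 := ⟨m - 1, by omega⟩
        rw [show (m' + 1 + (m' + 1) - 1) / 2 = m' by omega,
          show (m' + 1 + (m' + 1)) / 2 = m' + 1 by omega]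
        push_cast
        apply le_of_eq
        field_simp
        ring
      · obtain ⟨m, rfl⟩ := ho
        rw [show (2 * m + 1 - 1) / 2 = m by omega, show (2 * m + 1) / 2 = m by omega]
        push_cast
        have hq : (0 : ℝ) ≤ (p : ℝ) ^ m := by positivity
        have hpow : (p : ℝ) ^ (2 * m + 1) = ((p : ℝ) ^ m) ^ 2 * p := by ring
        rw [hpow]
        have hkey : (0 : ℝ) ≤ (((p : ℝ) ^ m) ^ 2) ^ 2 * ((p : ℝ) - 1) ^ 2 := by positivity
        have hinv : (p : ℝ) * (1 + (p : ℝ)⁻¹) = p + 1 := by field_simp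
        have hR : (((p : ℝ) ^ m) ^ 2 * (p : ℝ) * (1 + (p : ℝ)⁻¹)) ^ 2
            = (((p : ℝ) ^ m) ^ 2 * ((p : ℝ) + 1)) ^ 2 := by
          rw [mul_assoc, hinv]
        rw [hR]
        nlinarith [hkey]
  | coprime a b ha hb hab iha ihb =>
      rw [myPsiTildeMul (by omega) (by omega) hab, myPsiMul (by omega) (by omega) hab]
      push_cast
      have h1 : (0 : ℝ) ≤ (psiTilde b : ℝ) ^ 2 * b := by positivity
      have h2 : (0 : ℝ) ≤ psi a ^ 2 := le_trans (by positivity) iha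
      nlinarith [mul_le_mul iha ihb h1 h2]

end PsiTildeAux

/-- `ψ̃` is multiplicative; `ψ̃(pᵏ) = 2p^{(k−1)/2}` for `k` odd,
`ψ̃(pᵏ) = (1+1/p)p^{k/2}` for `k` even; and `ψ̃(N) ≤ ψ(N)/√N`. -/
theorem psiTilde_properties :
    psiTilde 1 = 1 ∧
    (∀ a b : ℕ, 1 ≤ a → 1 ≤ b → Nat.Coprime a b →
      psiTilde (a * b) = psiTilde a * psiTilde b) ∧
    (∀ p k : ℕ, p.Prime → 1 ≤ k → Odd k → psiTilde (p ^ k) = 2 * p ^ ((k - 1) / 2)) ∧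
    (∀ p k : ℕ, p.Prime → 1 ≤ k → Even k →
      (psiTilde (p ^ k) : ℝ) = (1 + (p : ℝ)⁻¹) * (p : ℝ) ^ (k / 2)) ∧
    (∀ N : ℕ, 1 ≤ N → (psiTilde N : ℝ) ≤ psi N / Real.sqrt N) := by
  refine ⟨?_, ?_, ?_, ?_, ?_⟩
  · simp [psiTilde]
  · intro a b ha hb hab
    exact myPsiTildeMul (by omega) (by omega) hab
  · intro p k hp hk hodd
    obtain ⟨m, rfl⟩ := hodd
    rw [myPsiTildePrimePow hp hk, show (2 * m + 1 - 1) / 2 = m by omega,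
      show (2 * m + 1) / 2 = m by omega]
    ring
  · intro p k hp hk heven
    obtain ⟨m, rfl⟩ := heven
    obtain ⟨m', rfl⟩ : ∃ m', m = m' + 1 := ⟨m - 1, by omega⟩
    have hp0 : (0 : ℝ) < p := by exact_mod_cast hp.pos
    rw [myPsiTildePrimePow hp hk, show (m' + 1 + (m' + 1) - 1) / 2 = m' by omega,
      show (m' + 1 + (m' + 1)) / 2 = m' + 1 by omega]
    push_cast
    field_simp
    ring
  · intro N hN
    have key := myPsiTildeSqLe N
    have hN0 : (0 : ℝ) < N := by exact_mod_cast hN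
    have hpsi0 : 0 ≤ psi N := by
      unfold psi
      positivity
    rw [le_div_iff₀ (Real.sqrt_pos.mpr hN0)]
    have heq : (psiTilde N : ℝ) * Real.sqrt N = Real.sqrt ((psiTilde N : ℝ) ^ 2 * N) := by
      rw [Real.sqrt_mul (by positivity), Real.sqrt_sq (by positivity)]
    rw [heq]
    calc Real.sqrt ((psiTilde N : ℝ) ^ 2 * N) ≤ Real.sqrt (psi N ^ 2) :=
          Real.sqrt_le_sqrt key
      _ = psi N := Real.sqrt_sq hpsi0
end
end
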